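/- For every n ≥ 1 and every integer m ≥ 2, the number of permutations of {1,…,n} that avoid every pattern in A_m equals the number of permutations of {1,…,n} that avoid every pattern in B_m (i.e., the pattern sets A_m and B_m are Wilf equivalent). -/

import Mathlib

set_option maxHeartbeats 1000000

/-- `π` contains the pattern `τ` if there is a strictly increasing sequence of indices
along which the values of `π` are in the same relative order as the values of `τ`. -/
def Contains {n m : ℕ} (π : Equiv.Perm (Fin n)) (τ : Equiv.Perm (Fin m)) : Prop :=
  ∃ f : Fin m → Fin n, StrictMono f ∧ ∀ s t : Fin m, π (f s) < π (f t) ↔ τ s < τ t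

namespace Wilf

variable {n m : ℕ}

def cnt (π : Fin n → Fin n) (i v : Fin n) : ℕ :=
  (Finset.univ.filter fun k => k < i ∧ π k < v).card

def PA (m : ℕ) (π : Fin n → Fin n) : Prop :=
  ∀ i j : Fin n, i < j → π j < π i → cnt π i (π j) < m - 2

def PB (m : ℕ) (π : Fin n → Fin n) : Prop :=
  ∀ i j : Fin n, i < j → π i < π j → cnt π i (π i) < m - 2

def D (m : ℕ) (π : Fin n → Fin n) : Fin n → Option (Fin n) :=
  fun i => if m - 2 ≤ cnt π i (π i) then none else some (π i)

lemma cnt_le_cnt {π π' : Fin n → Fin n} {i i' v v'}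
    (h : ∀ k, k < i → π k < v → π' k < v') (hii : i ≤ i') :
    cnt π i v ≤ cnt π' i' v' := by
  apply Finset.card_le_card
  intro k hk
  simp only [Finset.mem_filter, Finset.mem_univ, true_and] at hk ⊢
  exact ⟨lt_of_lt_of_le hk.1 hii, h k hk.1 hk.2⟩

lemma cnt_congr {π π' : Fin n → Fin n} {i v v'}
    (h : ∀ k, k < i → (π k < v ↔ π' k < v')) :
    cnt π i v = cnt π' i v' :=
  le_antisymm (cnt_le_cnt (fun k hk => (h k hk).mp) le_rfl)
    (cnt_le_cnt (fun k hk => (h k hk).mpr) le_rfl)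

/-- `D` equality means: same high positions, same values at low positions. -/
lemma D_iff {π π' : Fin n → Fin n} :
    D m π = D m π' ↔ ∀ i, (m - 2 ≤ cnt π i (π i) ↔ m - 2 ≤ cnt π' i (π' i)) ∧
      (¬ m - 2 ≤ cnt π i (π i) → π i = π' i) := by
  constructor
  · intro h i
    have hi := congrFun h i
    unfold D at hi
    by_cases h1 : m - 2 ≤ cnt π i (π i) <;> by_cases h2 : m - 2 ≤ cnt π' i (π' i)
    · exact ⟨iff_of_true h1 h2, fun hc => absurd h1 hc⟩
    · rw [if_pos h1, if_neg h2] at hi; exact absurd hi (by simp)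
    · rw [if_neg h1, if_pos h2] at hi; exact absurd hi (by simp)
    · rw [if_neg h1, if_neg h2] at hi
      exact ⟨iff_of_false h1 h2, fun _ => Option.some_injective _ hi⟩
  · intro h
    funext i
    unfold D
    obtain ⟨h1, h2⟩ := h i
    split_ifs with ha hb hb
    · rfl
    · exact absurd (h1.mp ha) hb
    · exact absurd (h1.mpr hb) ha
    · rw [h2 ha]

lemma uniq_aux (σ σ' : Equiv.Perm (Fin n)) (hD : D m ⇑σ = D m ⇑σ')
    (key : ∀ i : Fin n, (∀ k, k < i → σ k = σ' k) →
      m - 2 ≤ cnt ⇑σ i (σ i) → m - 2 ≤ cnt ⇑σ' i (σ' i) → σ i ≠ σ' i → False) :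
    σ = σ' := by
  rw [D_iff] at hD
  have main : ∀ N : ℕ, ∀ i : Fin n, i.val < N → σ i = σ' i := by
    intro N
    induction N with
    | zero => intro i hi; omega
    | succ N ih =>
      intro i hi
      rcases Nat.lt_or_ge i.val N with h | h
      · exact ih i h
      have hpref : ∀ k, k < i → σ k = σ' k := fun k hk => ih k (by omega)
      by_cases hhi : m - 2 ≤ cnt ⇑σ i (σ i)
      · have hhi' : m - 2 ≤ cnt ⇑σ' i (σ' i) := (hD i).1.mp hhi
        by_contra hne
        exact key i hpref hhi hhi' hne
      · exact (hD i).2 hhi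
  exact Equiv.ext fun i => main n i i.isLt

lemma uniqA (σ σ' : Equiv.Perm (Fin n)) (hA : PA m ⇑σ) (hA' : PA m ⇑σ')
    (hD : D m ⇑σ = D m ⇑σ') : σ = σ' := by
  apply uniq_aux σ σ' hD
  intro i hpref hhi hhi' hne
  have symm_case : ∀ (ρ ρ' : Equiv.Perm (Fin n)), PA m ⇑ρ →
      (∀ k, k < i → ρ k = ρ' k) → m - 2 ≤ cnt ⇑ρ' i (ρ' i) → ρ' i < ρ i → False := by
    intro ρ ρ' hPA hpr hh' hlt
    have hρj : ρ (ρ.symm (ρ' i)) = ρ' i := ρ.apply_symm_apply (ρ' i)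
    have hji : ρ.symm (ρ' i) ≠ i := by
      intro hji; rw [hji] at hρj; exact absurd hρj (ne_of_gt hlt)
    have hij : i < ρ.symm (ρ' i) := by
      rcases lt_or_gt_of_ne hji with h | h
      · exfalso
        have : ρ' (ρ.symm (ρ' i)) = ρ' i := by rw [← hpr _ h, hρj]
        exact hji (ρ'.injective this)
      · exact h
    have hlt' : ρ (ρ.symm (ρ' i)) < ρ i := by rw [hρj]; exact hlt
    have hcnt : cnt ⇑ρ i (ρ (ρ.symm (ρ' i))) = cnt ⇑ρ' i (ρ' i) := by
      apply cnt_congr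
      intro k hk
      rw [hpr k hk, hρj]
    have := hPA i _ hij hlt'
    omega
  rcases lt_or_gt_of_ne hne with h | h
  · exact symm_case σ' σ hA' (fun k hk => (hpref k hk).symm) hhi h
  · exact symm_case σ σ' hA hpref hhi' h

lemma uniqB (σ σ' : Equiv.Perm (Fin n)) (hB : PB m ⇑σ) (hB' : PB m ⇑σ')
    (hD : D m ⇑σ = D m ⇑σ') : σ = σ' := by
  apply uniq_aux σ σ' hD
  intro i hpref hhi hhi' hne
  have symm_case : ∀ (ρ ρ' : Equiv.Perm (Fin n)), PB m ⇑ρ' →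
      (∀ k, k < i → ρ k = ρ' k) → m - 2 ≤ cnt ⇑ρ' i (ρ' i) → ρ' i < ρ i → False := by
    intro ρ ρ' hPB hpr hh' hlt
    have hρj : ρ' (ρ'.symm (ρ i)) = ρ i := ρ'.apply_symm_apply (ρ i)
    have hji : ρ'.symm (ρ i) ≠ i := by
      intro hji; rw [hji] at hρj; exact absurd hρj (ne_of_lt hlt)
    have hij : i < ρ'.symm (ρ i) := by
      rcases lt_or_gt_of_ne hji with h | h
      · exfalso
        have : ρ (ρ'.symm (ρ i)) = ρ i := by rw [hpr _ h, hρj]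
        exact hji (ρ.injective this)
      · exact h
    have := hPB i _ hij (by rw [hρj]; exact hlt)
    omega
  rcases lt_or_gt_of_ne hne with h | h
  · exact symm_case σ' σ hB (fun k hk => (hpref k hk).symm) hhi h
  · exact symm_case σ σ' hB' hpref hhi' h

lemma swap_lt {i j t : Fin n} (hi : i < t) (hj : j < t) {k : Fin n} (hk : k < t) :
    Equiv.swap i j k < t := by
  rcases eq_or_ne k i with rfl | hki
  · rwa [Equiv.swap_apply_left]
  rcases eq_or_ne k j with rfl | hkj
  · rwa [Equiv.swap_apply_right]
  · rwa [Equiv.swap_apply_of_ne_of_ne hki hkj]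

lemma cnt_swap (σ : Equiv.Perm (Fin n)) {i j t : Fin n} (hi : i < t) (hj : j < t) (v : Fin n) :
    cnt ⇑(σ * Equiv.swap i j) t v = cnt ⇑σ t v := by
  unfold cnt
  apply Finset.card_nbij' (fun k => Equiv.swap i j k) (fun k => Equiv.swap i j k)
  · intro k hk
    simp only [Finset.mem_coe, Finset.mem_filter, Finset.mem_univ, true_and] at hk ⊢; simp only [Equiv.Perm.mul_apply] at hk ⊢
    exact ⟨swap_lt hi hj hk.1, hk.2⟩
  · intro k hk
    simp only [Finset.mem_coe, Finset.mem_filter, Finset.mem_univ, true_and] at hk ⊢; simp only [Equiv.Perm.mul_apply] at hk ⊢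
    exact ⟨swap_lt hi hj hk.1, by rw [Equiv.swap_apply_self]; exact hk.2⟩
  · intro k _; exact Equiv.swap_apply_self _ _ _
  · intro k _; exact Equiv.swap_apply_self _ _ _

lemma D_swap (σ : Equiv.Perm (Fin n)) {i j : Fin n} (hij : i < j)
    (hlow : m - 2 ≤ cnt ⇑σ i (min (σ i) (σ j)))
    (hmid : ∀ t, i < t → t < j → (σ t < σ i ↔ σ t < σ j)) :
    D m ⇑(σ * Equiv.swap i j) = D m ⇑σ := by
  set σ'' := σ * Equiv.swap i j with hσ''
  have happ : ∀ k, σ'' k = σ (Equiv.swap i j k) := fun k => Equiv.Perm.mul_apply ..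
  have hne : ∀ k, k ≠ i → k ≠ j → σ'' k = σ k := by
    intro k h1 h2; rw [happ, Equiv.swap_apply_of_ne_of_ne h1 h2]
  have hati : σ'' i = σ j := by rw [happ, Equiv.swap_apply_left]
  have hatj : σ'' j = σ i := by rw [happ, Equiv.swap_apply_right]
  have hmini : min (σ i) (σ j) ≤ σ i := min_le_left _ _
  have hminj : min (σ i) (σ j) ≤ σ j := min_le_right _ _
  funext t
  unfold D
  rcases lt_trichotomy t i with hti | rfl | hit
  · -- t < i : everything before t unchanged and value unchanged
    have hvt : σ'' t = σ t := hne t (ne_of_lt hti) (ne_of_lt (hti.trans hij))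
    have : cnt ⇑σ'' t (σ'' t) = cnt ⇑σ t (σ t) := by
      apply cnt_congr
      intro k hk
      rw [hne k (ne_of_lt (hk.trans hti)) (ne_of_lt ((hk.trans hti).trans hij)), hvt]
    rw [this, hvt]
  · -- t = i : high in both
    have h1 : m - 2 ≤ cnt ⇑σ t (σ t) :=
      le_trans hlow (cnt_le_cnt (fun k hk hv => lt_of_lt_of_le hv hmini) le_rfl)
    have h2 : m - 2 ≤ cnt ⇑σ'' t (σ'' t) := by
      rw [hati]
      refine le_trans hlow (cnt_le_cnt (fun k hk hv => ?_) le_rfl)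
      rw [hne k (ne_of_lt hk) (ne_of_lt (hk.trans hij))]
      exact lt_of_lt_of_le hv hminj
    rw [if_pos h1, if_pos h2]
  rcases lt_trichotomy t j with htj | rfl | hjt
  · -- i < t < j
    have hvt : σ'' t = σ t := hne t (ne_of_gt hit) (ne_of_lt htj)
    have hiff : σ j < σ t ↔ σ i < σ t := by
      have h1 := hmid t hit htj
      have h2 : σ t ≠ σ i := fun h => (ne_of_gt hit) (σ.injective h)
      have h3 : σ t ≠ σ j := fun h => (ne_of_lt htj) (σ.injective h)
      constructor
      · intro h
        rcases lt_or_gt_of_ne h2 with h' | h'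
        · exact absurd (h1.mp h') (not_lt.mpr (le_of_lt h))
        · exact h'
      · intro h
        rcases lt_or_gt_of_ne h3 with h' | h'
        · exact absurd (h1.mpr h') (not_lt.mpr (le_of_lt h))
        · exact h'
    have : cnt ⇑σ'' t (σ'' t) = cnt ⇑σ t (σ t) := by
      apply cnt_congr
      intro k hk
      rw [hvt]
      rcases eq_or_ne k i with rfl | hki
      · rw [hati]; exact ⟨fun h => hiff.mp h, fun h => hiff.mpr h⟩
      · rw [hne k hki (ne_of_lt (hk.trans htj))]
    rw [this, hvt]
  · -- t = j : high in both
    have h1 : m - 2 ≤ cnt ⇑σ t (σ t) := by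
      refine le_trans hlow (cnt_le_cnt (fun k hk hv => lt_of_lt_of_le hv hminj) (le_of_lt hij))
    have h2 : m - 2 ≤ cnt ⇑σ'' t (σ'' t) := by
      rw [hatj]
      refine le_trans hlow (cnt_le_cnt (fun k hk hv => ?_) (le_of_lt hij))
      rw [hne k (ne_of_lt hk) (ne_of_lt (hk.trans hij))]
      exact lt_of_lt_of_le hv hmini
    rw [if_pos h1, if_pos h2]
  · -- j < t
    have hvt : σ'' t = σ t := hne t (ne_of_gt (hij.trans hjt)) (ne_of_gt hjt)
    rw [hvt, cnt_swap σ (hij.trans hjt) hjt]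

lemma exA (π : Equiv.Perm (Fin n)) :
    ∃ σ : Equiv.Perm (Fin n), PA m ⇑σ ∧ D m ⇑σ = D m ⇑π := by
  classical
  set S : Finset (Equiv.Perm (Fin n)) := Finset.univ.filter (fun σ => D m ⇑σ = D m ⇑π) with hS
  have hπS : π ∈ S := by simp [hS]
  obtain ⟨g, hgS, hmin⟩ := Finset.exists_minimal (s := S.image (fun σ : Equiv.Perm (Fin n) => toLex ⇑σ))
    ⟨toLex ⇑π, Finset.mem_image_of_mem _ hπS⟩
  obtain ⟨σ, hσS, hgeq⟩ := Finset.mem_image.mp hgS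
  refine ⟨σ, ?_, (Finset.mem_filter.mp hσS).2⟩
  by_contra hPA
  unfold PA at hPA; push_neg at hPA
  obtain ⟨i, j0, hij0, hval0, hcnt0⟩ := hPA
  set W : Finset (Fin n) :=
    Finset.univ.filter (fun t => i < t ∧ σ t < σ i ∧ m - 2 ≤ cnt ⇑σ i (σ t)) with hW
  have hjW : j0 ∈ W := by
    simp only [hW, Finset.mem_filter, Finset.mem_univ, true_and]
    exact ⟨hij0, hval0, hcnt0⟩
  obtain ⟨j, hjmem, hjmax⟩ := W.exists_max_image (fun t => σ t) ⟨j0, hjW⟩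
  simp only [hW, Finset.mem_filter, Finset.mem_univ, true_and] at hjmem
  obtain ⟨hij, hji, hcnt⟩ := hjmem
  have hDsw : D m ⇑(σ * Equiv.swap i j) = D m ⇑σ := by
    apply D_swap σ hij
    · rwa [min_eq_right (le_of_lt hji)]
    · intro t h1t h2t
      have htne_i : σ t ≠ σ i := fun h => (ne_of_gt h1t) (σ.injective h)
      have htne_j : σ t ≠ σ j := fun h => (ne_of_lt h2t) (σ.injective h)
      have hdisj : σ t < σ j ∨ σ i < σ t := by
        rcases lt_or_gt_of_ne htne_j with h | h
        · exact Or.inl h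
        rcases lt_or_gt_of_ne htne_i with h' | h'
        · -- σ j < σ t < σ i : t would be a better witness
          exfalso
          have htW : t ∈ W := by
            simp only [hW, Finset.mem_filter, Finset.mem_univ, true_and]
            exact ⟨h1t, h', le_trans hcnt (cnt_le_cnt (fun k hk hv => hv.trans h) le_rfl)⟩
          exact absurd (hjmax t htW) (not_le.mpr h)
        · exact Or.inr h'
      rcases hdisj with h | h
      · exact iff_of_true (h.trans hji) h
      · exact iff_of_false (not_lt.mpr (le_of_lt h)) (not_lt.mpr (le_of_lt (hji.trans h)))
  have hmemS : (σ * Equiv.swap i j) ∈ S := by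
    simp only [hS, Finset.mem_filter, Finset.mem_univ, true_and]
    exact hDsw.trans (Finset.mem_filter.mp hσS).2
  have hlex : toLex ⇑(σ * Equiv.swap i j) < toLex ⇑σ := by
    refine ⟨i, fun k hk => ?_, ?_⟩
    · show σ (Equiv.swap i j k) = σ k
      rw [Equiv.swap_apply_of_ne_of_ne (ne_of_lt hk) (ne_of_lt (hk.trans hij))]
    · show σ (Equiv.swap i j i) < σ i
      rw [Equiv.swap_apply_left]; exact hji
  have hlex' : toLex ⇑(σ * Equiv.swap i j) < g := hgeq ▸ hlex
  exact hlex'.not_ge (hmin (Finset.mem_image_of_mem _ hmemS) hlex'.le)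

lemma exB (π : Equiv.Perm (Fin n)) :
    ∃ σ : Equiv.Perm (Fin n), PB m ⇑σ ∧ D m ⇑σ = D m ⇑π := by
  classical
  set S : Finset (Equiv.Perm (Fin n)) := Finset.univ.filter (fun σ => D m ⇑σ = D m ⇑π) with hS
  have hπS : π ∈ S := by simp [hS]
  obtain ⟨g, hgS, hmax⟩ := Finset.exists_maximal (s := S.image (fun σ : Equiv.Perm (Fin n) => toLex ⇑σ))
    ⟨toLex ⇑π, Finset.mem_image_of_mem _ hπS⟩
  obtain ⟨σ, hσS, hgeq⟩ := Finset.mem_image.mp hgS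
  refine ⟨σ, ?_, (Finset.mem_filter.mp hσS).2⟩
  by_contra hPB
  unfold PB at hPB; push_neg at hPB
  obtain ⟨i, j0, hij0, hval0, hcnt0⟩ := hPB
  set W : Finset (Fin n) := Finset.univ.filter (fun t => i < t ∧ σ i < σ t) with hW
  have hjW : j0 ∈ W := by
    simp only [hW, Finset.mem_filter, Finset.mem_univ, true_and]
    exact ⟨hij0, hval0⟩
  obtain ⟨j, hjmem, hjmin⟩ := W.exists_min_image (fun t => σ t) ⟨j0, hjW⟩
  simp only [hW, Finset.mem_filter, Finset.mem_univ, true_and] at hjmem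
  obtain ⟨hij, hji⟩ := hjmem
  have hDsw : D m ⇑(σ * Equiv.swap i j) = D m ⇑σ := by
    apply D_swap σ hij
    · rwa [min_eq_left (le_of_lt hji)]
    · intro t h1t h2t
      have htne_i : σ t ≠ σ i := fun h => (ne_of_gt h1t) (σ.injective h)
      have htne_j : σ t ≠ σ j := fun h => (ne_of_lt h2t) (σ.injective h)
      have hdisj : σ t < σ i ∨ σ j < σ t := by
        rcases lt_or_gt_of_ne htne_i with h | h
        · exact Or.inl h
        rcases lt_or_gt_of_ne htne_j with h' | h'
        · exfalso
          have htW : t ∈ W := by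
            simp only [hW, Finset.mem_filter, Finset.mem_univ, true_and]
            exact ⟨h1t, h⟩
          exact absurd (hjmin t htW) (not_le.mpr h')
        · exact Or.inr h'
      rcases hdisj with h | h
      · exact iff_of_true h (h.trans hji)
      · exact iff_of_false (not_lt.mpr (le_of_lt (hji.trans h))) (not_lt.mpr (le_of_lt h))
  have hmemS : (σ * Equiv.swap i j) ∈ S := by
    simp only [hS, Finset.mem_filter, Finset.mem_univ, true_and]
    exact hDsw.trans (Finset.mem_filter.mp hσS).2
  have hlex : toLex ⇑σ < toLex ⇑(σ * Equiv.swap i j) := by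
    refine ⟨i, fun k hk => ?_, ?_⟩
    · show σ k = σ (Equiv.swap i j k)
      rw [Equiv.swap_apply_of_ne_of_ne (ne_of_lt hk) (ne_of_lt (hk.trans hij))]
    · show σ i < σ (Equiv.swap i j i)
      rw [Equiv.swap_apply_left]; exact hji
  have hlex' : g < toLex ⇑(σ * Equiv.swap i j) := hgeq ▸ hlex
  exact hlex'.not_ge (hmax (Finset.mem_image_of_mem _ hmemS) hlex'.le)

lemma top_idx (hm : 2 ≤ m) (e : Equiv.Perm (Fin m)) (a : Fin m)
    (h : ∀ s, s ≠ a → e s < e a) : e a = ⟨m - 1, by omega⟩ := by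
  obtain ⟨s₀, hs₀⟩ := e.surjective ⟨m - 1, by omega⟩
  rcases eq_or_ne s₀ a with rfl | hne
  · exact hs₀
  · exfalso
    have h1 := h s₀ hne
    rw [hs₀] at h1
    have h2 : m - 1 < (e a).val := h1
    have h3 := (e a).isLt
    omega

lemma snd_idx (hm : 2 ≤ m) (e : Equiv.Perm (Fin m)) (a b : Fin m) (hab : a ≠ b)
    (hea : e a = ⟨m - 1, by omega⟩) (h : ∀ s, s ≠ a → s ≠ b → e s < e b) :
    e b = ⟨m - 2, by omega⟩ := by
  obtain ⟨s₀, hs₀⟩ := e.surjective ⟨m - 2, by omega⟩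
  rcases eq_or_ne s₀ b with rfl | hneb
  · exact hs₀
  rcases eq_or_ne s₀ a with rfl | hnea
  · exfalso
    rw [hea] at hs₀
    have hv : m - 1 = m - 2 := congrArg Fin.val hs₀
    omega
  · exfalso
    have hlt := h s₀ hnea hneb
    rw [hs₀] at hlt
    have h3 : m - 2 < (e b).val := hlt
    have hne' : e b ≠ e a := fun hh => hab.symm (e.injective hh)
    rw [hea] at hne'
    have h1 : (e b).val < m := (e b).isLt
    have h2 : (e b).val ≠ m - 1 := fun hh => hne' (Fin.ext hh)
    omega

lemma pair_contains (hm : 2 ≤ m) (π : Equiv.Perm (Fin n)) (i j : Fin n) (hij : i < j)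
    (hne : π i ≠ π j) (K : Finset (Fin n)) (hKcard : K.card = m - 2)
    (hK : ∀ k ∈ K, k < i ∧ π k < π i ∧ π k < π j) :
    ∃ τ : Equiv.Perm (Fin m), Contains π τ ∧
      (π j < π i → τ ⟨m - 2, by omega⟩ = ⟨m - 1, by omega⟩ ∧
        τ ⟨m - 1, by omega⟩ = ⟨m - 2, by omega⟩) ∧
      (π i < π j → τ ⟨m - 2, by omega⟩ = ⟨m - 2, by omega⟩ ∧
        τ ⟨m - 1, by omega⟩ = ⟨m - 1, by omega⟩) := by
  classical
  set g := K.orderIsoOfFin hKcard with hg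
  set f : Fin m → Fin n := fun s =>
    if h : s.val < m - 2 then (g ⟨s.val, h⟩ : Fin n) else if s.val = m - 2 then i else j with hf
  have hfK : ∀ s : Fin m, (h : s.val < m - 2) → f s = (g ⟨s.val, h⟩ : Fin n) := by
    intro s h; simp only [hf, dif_pos h]
  have hfKmem : ∀ s : Fin m, s.val < m - 2 → f s ∈ K := by
    intro s h; rw [hfK s h]; exact (g ⟨s.val, h⟩).2
  have hfi : f ⟨m - 2, by omega⟩ = i := by simp [hf]
  have hfj : ∀ s : Fin m, ¬ s.val < m - 2 → s.val ≠ m - 2 → f s = j := by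
    intro s h1 h2; simp only [hf, dif_neg h1, if_neg h2]
  have hfj' : f ⟨m - 1, by omega⟩ = j := hfj _ (by simp; omega) (by simp; omega)
  have hKi : ∀ k ∈ K, k < i := fun k hk => (hK k hk).1
  have hmono : StrictMono f := by
    intro s t hst
    by_cases hs : s.val < m - 2
    · rw [hfK s hs]
      by_cases ht : t.val < m - 2
      · rw [hfK t ht]
        have : (⟨s.val, hs⟩ : Fin (m-2)) < ⟨t.val, ht⟩ := hst
        exact_mod_cast g.strictMono this
      · have hsin : (g ⟨s.val, hs⟩ : Fin n) ∈ K := (g ⟨s.val, hs⟩).2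
        have hlt : (g ⟨s.val, hs⟩ : Fin n) < i := hKi _ hsin
        by_cases ht2 : t.val = m - 2
        · have : t = ⟨m - 2, by omega⟩ := Fin.ext ht2
          rw [this, hfi]; exact hlt
        · rw [hfj t ht ht2]; exact hlt.trans hij
    · have hs2 : s.val = m - 2 := by
        have := hst; rw [Fin.lt_def] at this
        have := t.isLt
        omega
      have hsi : f s = i := by
        have : s = ⟨m - 2, by omega⟩ := Fin.ext hs2
        rw [this, hfi]
      have ht1 : ¬ t.val < m - 2 := by rw [Fin.lt_def] at hst; omega
      have ht2 : t.val ≠ m - 2 := by rw [Fin.lt_def] at hst; omega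
      rw [hsi, hfj t ht1 ht2]; exact hij
  have hfinj : Function.Injective f := hmono.injective
  set v : Fin m → Fin n := fun s => π (f s) with hv
  have hvinj : Function.Injective v := fun a b hab => hfinj (π.injective hab)
  set T : Finset (Fin n) := Finset.image v Finset.univ with hT
  have hTcard : T.card = m := by
    rw [hT, Finset.card_image_of_injective _ hvinj, Finset.card_univ, Fintype.card_fin]
  set oiso := T.orderIsoOfFin hTcard with hoiso
  have hvT : ∀ s, v s ∈ T := fun s => Finset.mem_image_of_mem v (Finset.mem_univ s)
  set τ₀ : Fin m → Fin m := fun s => oiso.symm ⟨v s, hvT s⟩ with hτ₀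
  have hτ₀inj : Function.Injective τ₀ := by
    intro a b hab
    have := oiso.symm.injective hab
    exact hvinj (congrArg Subtype.val this)
  set τ : Equiv.Perm (Fin m) := Equiv.ofBijective τ₀ (Finite.injective_iff_bijective.mp hτ₀inj)
    with hτ
  have hτapp : ∀ s, τ s = τ₀ s := fun s => rfl
  have key : ∀ s t : Fin m, π (f s) < π (f t) ↔ τ s < τ t := by
    intro s t
    rw [hτapp, hτapp, hτ₀]
    constructor
    · intro h
      have : (⟨v s, hvT s⟩ : {x // x ∈ T}) < ⟨v t, hvT t⟩ := by
        rw [Subtype.mk_lt_mk]; exact h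
      exact oiso.symm.strictMono this
    · intro h
      have := oiso.symm.lt_iff_lt.mp h
      rw [Subtype.mk_lt_mk] at this
      exact this
  refine ⟨τ, ⟨f, hmono, key⟩, ?_, ?_⟩
  · -- π j < π i : i is max, j is second
    intro hji
    have hsmall : ∀ s : Fin m, s ≠ ⟨m - 2, by omega⟩ → s ≠ ⟨m - 1, by omega⟩ →
        π (f s) < π i ∧ π (f s) < π j := by
      intro s h1 h2
      have hs : s.val < m - 2 := by
        have h1' : s.val ≠ m - 2 := fun hh => h1 (Fin.ext hh)
        have h2' : s.val ≠ m - 1 := fun hh => h2 (Fin.ext hh)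
        have := s.isLt; omega
      have := hK _ (hfKmem s hs)
      exact ⟨this.2.1, this.2.2⟩
    have hne' : (⟨m - 2, by omega⟩ : Fin m) ≠ ⟨m - 1, by omega⟩ := by
      simp only [ne_eq, Fin.mk.injEq]; omega
    have htop : τ ⟨m - 2, by omega⟩ = ⟨m - 1, by omega⟩ := by
      apply top_idx hm τ
      intro s hs
      apply (key s _).mp
      rw [hfi]
      rcases eq_or_ne s ⟨m - 1, by omega⟩ with heq | hs2
      · rw [heq, hfj']; exact hji
      · exact (hsmall s hs hs2).1
    refine ⟨htop, ?_⟩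
    apply snd_idx hm τ _ _ hne' htop
    intro s h1 h2
    apply (key s _).mp
    rw [hfj']
    exact (hsmall s h1 h2).2
  · -- π i < π j : j is max, i is second
    intro hij'
    have hsmall : ∀ s : Fin m, s ≠ ⟨m - 2, by omega⟩ → s ≠ ⟨m - 1, by omega⟩ →
        π (f s) < π i ∧ π (f s) < π j := by
      intro s h1 h2
      have hs : s.val < m - 2 := by
        have h1' : s.val ≠ m - 2 := fun hh => h1 (Fin.ext hh)
        have h2' : s.val ≠ m - 1 := fun hh => h2 (Fin.ext hh)
        have := s.isLt; omega
      have := hK _ (hfKmem s hs)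
      exact ⟨this.2.1, this.2.2⟩
    have hne' : (⟨m - 1, by omega⟩ : Fin m) ≠ ⟨m - 2, by omega⟩ := by
      simp only [ne_eq, Fin.mk.injEq]; omega
    have htop : τ ⟨m - 1, by omega⟩ = ⟨m - 1, by omega⟩ := by
      apply top_idx hm τ
      intro s hs
      apply (key s _).mp
      rw [hfj']
      rcases eq_or_ne s ⟨m - 2, by omega⟩ with heq | hs2
      · rw [heq, hfi]; exact hij'
      · exact (hsmall s hs2 hs).2
    have hsnd : τ ⟨m - 2, by omega⟩ = ⟨m - 2, by omega⟩ := by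
      apply snd_idx hm τ _ _ hne' htop
      intro s h1 h2
      apply (key s _).mp
      rw [hfi]
      exact (hsmall s h2 h1).1
    exact ⟨hsnd, htop⟩

lemma iffA (hm : 2 ≤ m) (π : Equiv.Perm (Fin n)) :
    (∀ τ : Equiv.Perm (Fin m),
        τ ⟨m - 2, by omega⟩ = ⟨m - 1, by omega⟩ → τ ⟨m - 1, by omega⟩ = ⟨m - 2, by omega⟩ →
          ¬ Contains π τ) ↔ PA m ⇑π := by
  constructor
  · intro hQ
    by_contra hPA
    unfold PA at hPA; push_neg at hPA
    obtain ⟨i, j, hij, hval, hcnt⟩ := hPA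
    obtain ⟨K, hKsub, hKcard⟩ := Finset.exists_subset_card_eq hcnt
    have hK : ∀ k ∈ K, k < i ∧ π k < π i ∧ π k < π j := by
      intro k hk
      have := hKsub hk
      simp only [Finset.mem_filter, Finset.mem_univ, true_and] at this
      exact ⟨this.1, this.2.trans hval, this.2⟩
    obtain ⟨τ, hcont, hA, _⟩ := pair_contains hm π i j hij (ne_of_gt hval) K hKcard hK
    obtain ⟨ht1, ht2⟩ := hA hval
    exact hQ τ ht1 ht2 hcont
  · intro hPA τ h1 h2 hcont
    obtain ⟨f, hmono, hiff⟩ := hcont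
    have hol : m - 2 < m := by omega
    have hol2 : m - 1 < m := by omega
    have hols : ∀ s : Fin (m - 2), (s.val : ℕ) < m :=
      fun s => Nat.lt_of_lt_of_le s.isLt (Nat.sub_le m 2)
    have h1' : τ ⟨m - 2, hol⟩ = ⟨m - 1, hol2⟩ := h1
    have h2' : τ ⟨m - 1, hol2⟩ = ⟨m - 2, hol⟩ := h2
    have hij : f ⟨m - 2, hol⟩ < f ⟨m - 1, hol2⟩ := by
      apply hmono
      rw [Fin.mk_lt_mk]
      omega
    have hval : π (f ⟨m - 1, hol2⟩) < π (f ⟨m - 2, hol⟩) := by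
      refine (hiff ⟨m - 1, hol2⟩ ⟨m - 2, hol⟩).mpr ?_
      rw [h1', h2', Fin.mk_lt_mk]
      omega
    have hcnt : m - 2 ≤ cnt ⇑π (f ⟨m - 2, hol⟩) (π (f ⟨m - 1, hol2⟩)) := by
      have hcard : m - 2 = (Finset.univ : Finset (Fin (m - 2))).card := by
        rw [Finset.card_univ, Fintype.card_fin]
      refine le_trans (le_of_eq hcard) ?_
      unfold cnt
      apply Finset.card_le_card_of_injOn (fun s => f ⟨s.val, hols s⟩)
      · intro s _
        simp only [Finset.mem_coe, Finset.mem_filter, Finset.mem_univ, true_and]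
        refine ⟨hmono ?_, ?_⟩
        · rw [Fin.mk_lt_mk]
          exact s.isLt
        · refine (hiff ⟨s.val, hols s⟩ ⟨m - 1, hol2⟩).mpr ?_
          rw [h2']
          have hne1 : τ ⟨s.val, hols s⟩ ≠ τ ⟨m - 2, hol⟩ := by
            intro hh
            have h' : (s.val : ℕ) = m - 2 := congrArg Fin.val (τ.injective hh)
            have := s.isLt; omega
          have hne2 : τ ⟨s.val, hols s⟩ ≠ τ ⟨m - 1, hol2⟩ := by
            intro hh
            have h' : (s.val : ℕ) = m - 1 := congrArg Fin.val (τ.injective hh)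
            have := s.isLt; omega
          rw [h1'] at hne1; rw [h2'] at hne2
          have hv1 : (τ ⟨s.val, hols s⟩).val ≠ m - 1 := fun hh => hne1 (Fin.ext hh)
          have hv2 : (τ ⟨s.val, hols s⟩).val ≠ m - 2 := fun hh => hne2 (Fin.ext hh)
          have hlt := (τ ⟨s.val, hols s⟩).isLt
          show (τ ⟨s.val, hols s⟩).val < m - 2
          omega
      · intro a _ b _ hab
        have h' := hmono.injective hab
        have := congrArg Fin.val h'
        exact Fin.ext this
    exact absurd hcnt (not_le.mpr (hPA _ _ hij hval))

lemma iffB (hm : 2 ≤ m) (π : Equiv.Perm (Fin n)) :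
    (∀ τ : Equiv.Perm (Fin m),
        τ ⟨m - 2, by omega⟩ = ⟨m - 2, by omega⟩ → τ ⟨m - 1, by omega⟩ = ⟨m - 1, by omega⟩ →
          ¬ Contains π τ) ↔ PB m ⇑π := by
  constructor
  · intro hQ
    by_contra hPB
    unfold PB at hPB; push_neg at hPB
    obtain ⟨i, j, hij, hval, hcnt⟩ := hPB
    obtain ⟨K, hKsub, hKcard⟩ := Finset.exists_subset_card_eq hcnt
    have hK : ∀ k ∈ K, k < i ∧ π k < π i ∧ π k < π j := by
      intro k hk
      have := hKsub hk
      simp only [Finset.mem_filter, Finset.mem_univ, true_and] at this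
      exact ⟨this.1, this.2, this.2.trans hval⟩
    obtain ⟨τ, hcont, _, hB⟩ := pair_contains hm π i j hij (ne_of_lt hval) K hKcard hK
    obtain ⟨ht1, ht2⟩ := hB hval
    exact hQ τ ht1 ht2 hcont
  · intro hPB τ h1 h2 hcont
    obtain ⟨f, hmono, hiff⟩ := hcont
    have hol : m - 2 < m := by omega
    have hol2 : m - 1 < m := by omega
    have hols : ∀ s : Fin (m - 2), (s.val : ℕ) < m :=
      fun s => Nat.lt_of_lt_of_le s.isLt (Nat.sub_le m 2)
    have h1' : τ ⟨m - 2, hol⟩ = ⟨m - 2, hol⟩ := h1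
    have h2' : τ ⟨m - 1, hol2⟩ = ⟨m - 1, hol2⟩ := h2
    have hij : f ⟨m - 2, hol⟩ < f ⟨m - 1, hol2⟩ := by
      apply hmono
      rw [Fin.mk_lt_mk]
      omega
    have hval : π (f ⟨m - 2, hol⟩) < π (f ⟨m - 1, hol2⟩) := by
      refine (hiff ⟨m - 2, hol⟩ ⟨m - 1, hol2⟩).mpr ?_
      rw [h1', h2', Fin.mk_lt_mk]
      omega
    have hcnt : m - 2 ≤ cnt ⇑π (f ⟨m - 2, hol⟩) (π (f ⟨m - 2, hol⟩)) := by
      have hcard : m - 2 = (Finset.univ : Finset (Fin (m - 2))).card := by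
        rw [Finset.card_univ, Fintype.card_fin]
      refine le_trans (le_of_eq hcard) ?_
      unfold cnt
      apply Finset.card_le_card_of_injOn (fun s => f ⟨s.val, hols s⟩)
      · intro s _
        simp only [Finset.mem_coe, Finset.mem_filter, Finset.mem_univ, true_and]
        refine ⟨hmono ?_, ?_⟩
        · rw [Fin.mk_lt_mk]
          exact s.isLt
        · refine (hiff ⟨s.val, hols s⟩ ⟨m - 2, hol⟩).mpr ?_
          rw [h1']
          have hne1 : τ ⟨s.val, hols s⟩ ≠ τ ⟨m - 2, hol⟩ := by
            intro hh
            have h' : (s.val : ℕ) = m - 2 := congrArg Fin.val (τ.injective hh)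
            have := s.isLt; omega
          have hne2 : τ ⟨s.val, hols s⟩ ≠ τ ⟨m - 1, hol2⟩ := by
            intro hh
            have h' : (s.val : ℕ) = m - 1 := congrArg Fin.val (τ.injective hh)
            have := s.isLt; omega
          rw [h1'] at hne1; rw [h2'] at hne2
          have hv1 : (τ ⟨s.val, hols s⟩).val ≠ m - 2 := fun hh => hne1 (Fin.ext hh)
          have hv2 : (τ ⟨s.val, hols s⟩).val ≠ m - 1 := fun hh => hne2 (Fin.ext hh)
          have hlt := (τ ⟨s.val, hols s⟩).isLt
          show (τ ⟨s.val, hols s⟩).val < m - 2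
          omega
      · intro a _ b _ hab
        have h' := hmono.injective hab
        have := congrArg Fin.val h'
        exact Fin.ext this
    exact absurd hcnt (not_le.mpr (hPB _ _ hij hval))


end Wilf

theorem wilf_equivalence_Am_Bm (n m : ℕ) (hn : 1 ≤ n) (hm : 2 ≤ m) :
    Nat.card {π : Equiv.Perm (Fin n) //
      ∀ τ : Equiv.Perm (Fin m),
        τ ⟨m - 2, by omega⟩ = ⟨m - 1, by omega⟩ → τ ⟨m - 1, by omega⟩ = ⟨m - 2, by omega⟩ →
          ¬ Contains π τ} =
    Nat.card {π : Equiv.Perm (Fin n) //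
      ∀ τ : Equiv.Perm (Fin m),
        τ ⟨m - 2, by omega⟩ = ⟨m - 2, by omega⟩ → τ ⟨m - 1, by omega⟩ = ⟨m - 1, by omega⟩ →
          ¬ Contains π τ} := by
  rw [Nat.card_congr (Equiv.subtypeEquivRight (fun π => Wilf.iffA hm π)),
      Nat.card_congr (Equiv.subtypeEquivRight (fun π => Wilf.iffB hm π))]
  refine Nat.card_congr ?_
  refine Equiv.mk
    (fun p => ⟨(Wilf.exB p.1).choose, (Wilf.exB p.1).choose_spec.1⟩)
    (fun p => ⟨(Wilf.exA p.1).choose, (Wilf.exA p.1).choose_spec.1⟩) ?_ ?_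
  · rintro ⟨π, h⟩
    apply Subtype.ext
    exact Wilf.uniqA _ _ (Wilf.exA _).choose_spec.1 h
      (((Wilf.exA _).choose_spec.2).trans (Wilf.exB π).choose_spec.2)
  · rintro ⟨π, h⟩
    apply Subtype.ext
    exact Wilf.uniqB _ _ (Wilf.exB _).choose_spec.1 h
      (((Wilf.exB _).choose_spec.2).trans (Wilf.exA π).choose_spec.2)
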